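/- arXiv:2110.01059 — 3 statements merged into one kernel-verified Lean document; each statement's English description precedes it below -/
import Mathlib

section
/- For every integer g with g > 24, the images of a₁a₃′, a₂′³, and a₂′a₃′ in Q(g) form a ℚ-basis of the weighted-degree-3 component Q(g)_3; in particular dim_ℚ Q(g)_3 = 3. -/
open MvPolynomial

noncomputable section

/-- The polynomial ring `ℚ[a₁, a₂′, a₃′]`. -/
abbrev R3 : Type := MvPolynomial (Fin 3) ℚ

/-- Weights: `a₁` and `a₂′` have weight 1, `a₃′` has weight 2. -/
def wt : Fin 3 → ℕ := ![1, 1, 2]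

def a1 : R3 := X 0
def a2' : R3 := X 1
def a3' : R3 := X 2

/-- The relation `r₁`. -/
def r1 (g : ℤ) : R3 :=
  C (2*(g:ℚ)^3 + 9*(g:ℚ)^2 + 10*(g:ℚ)) * a1^3
    - C (8*(g:ℚ)^2 + 24*(g:ℚ) + 8) * (a1 * a3')

/-- The relation `r₂`. -/
def r2 (g : ℤ) : R3 :=
  C (12*(g:ℚ)^3 + 42*(g:ℚ)^2 + 36*(g:ℚ)) * (a1^2 * a2')
    - C (22*(g:ℚ)^3 + 121*(g:ℚ)^2 + 187*(g:ℚ) + 66) * (a1 * a3')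
    - C (24*(g:ℚ)^2 + 24*(g:ℚ)) * (a2' * a3')

/-- The relation `r₃`. -/
def r3 (g : ℤ) : R3 :=
  C (432*(g:ℚ)^3 + 1512*(g:ℚ)^2 + 1296*(g:ℚ)) * (a1 * a2'^2)
    - C (1450*(g:ℚ)^3 + 8001*(g:ℚ)^2 + 13115*(g:ℚ) + 5442) * (a1 * a3')
    - C (1584*(g:ℚ)^3 + 5544*(g:ℚ)^2 + 3936*(g:ℚ)) * (a2' * a3')

/-- The relation `r₄`. -/
def r4 (g : ℤ) : R3 :=
  C (14344*(g:ℚ)^6 + 165692*(g:ℚ)^5 + 747682*(g:ℚ)^4 + 1636869*(g:ℚ)^3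
      + 1719009*(g:ℚ)^2 + 677844*(g:ℚ) - 540) * (a1^2 * a3')
    - C (17280*(g:ℚ)^4 + 112320*(g:ℚ)^3 + 224640*(g:ℚ)^2 + 129600*(g:ℚ)) * (a2'^2 * a3')
    + C (352*(g:ℚ)^5 + 1440*(g:ℚ)^4 + 1448*(g:ℚ)^3 + 120*(g:ℚ)^2) * (a3'^2)

/-- The ideal `I(g) = (r₁, r₂, r₃, r₄)`. -/
def Ig (g : ℤ) : Ideal R3 := Ideal.span {r1 g, r2 g, r3 g, r4 g}

/-- The quotient map `R → Q(g) = R/I(g)`, as a `ℚ`-linear map. -/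
def Qmk (g : ℤ) : R3 →ₗ[ℚ] R3 ⧸ Ig g := (Ideal.Quotient.mkₐ ℚ (Ig g)).toLinearMap

/-- `Q(g)_i`: the image in `Q(g)` of the weighted-degree-`i` homogeneous polynomials. -/
def QComp (g : ℤ) (i : ℕ) : Submodule ℚ (R3 ⧸ Ig g) :=
  (weightedHomogeneousSubmodule ℚ wt i).map (Qmk g)

/-! ### Auxiliary material -/

namespace Hur

/-- Exponents of the six monomials of weighted degree 3, and the three monomials of `r₄`. -/
def M1 : Fin 3 →₀ ℕ := Finsupp.single 0 3
def M2 : Fin 3 →₀ ℕ := Finsupp.single 0 2 + Finsupp.single 1 1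
def M3 : Fin 3 →₀ ℕ := Finsupp.single 0 1 + Finsupp.single 1 2
def M4 : Fin 3 →₀ ℕ := Finsupp.single 1 3
def M5 : Fin 3 →₀ ℕ := Finsupp.single 0 1 + Finsupp.single 2 1
def M6 : Fin 3 →₀ ℕ := Finsupp.single 1 1 + Finsupp.single 2 1
def N1 : Fin 3 →₀ ℕ := Finsupp.single 0 2 + Finsupp.single 2 1
def N2 : Fin 3 →₀ ℕ := Finsupp.single 1 2 + Finsupp.single 2 1
def N3 : Fin 3 →₀ ℕ := Finsupp.single 2 2

lemma le3 {s m : Fin 3 →₀ ℕ} : s ≤ m ↔ s 0 ≤ m 0 ∧ s 1 ≤ m 1 ∧ s 2 ≤ m 2 := by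
  rw [Finsupp.le_def]
  constructor
  · intro h; exact ⟨h 0, h 1, h 2⟩
  · rintro ⟨h0, h1, h2⟩ i; fin_cases i <;> assumption

lemma eq3 {s m : Fin 3 →₀ ℕ} : s = m ↔ s 0 = m 0 ∧ s 1 = m 1 ∧ s 2 = m 2 := by
  constructor
  · rintro rfl; exact ⟨rfl, rfl, rfl⟩
  · rintro ⟨h0, h1, h2⟩; ext i; fin_cases i <;> assumption

lemma weight_eval (d : Fin 3 →₀ ℕ) : (Finsupp.weight wt) d = d 0 + d 1 + 2 * d 2 := by
  simp [Finsupp.weight_apply, Finsupp.sum_fintype, Fin.sum_univ_three, wt]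
  ring

/-- The coefficients of the relations, as rationals. -/
def cA1 (g : ℤ) : ℚ := 2*(g:ℚ)^3 + 9*(g:ℚ)^2 + 10*(g:ℚ)
def cB1 (g : ℤ) : ℚ := 8*(g:ℚ)^2 + 24*(g:ℚ) + 8
def cA2 (g : ℤ) : ℚ := 12*(g:ℚ)^3 + 42*(g:ℚ)^2 + 36*(g:ℚ)
def cB2 (g : ℤ) : ℚ := 22*(g:ℚ)^3 + 121*(g:ℚ)^2 + 187*(g:ℚ) + 66
def cC2 (g : ℤ) : ℚ := 24*(g:ℚ)^2 + 24*(g:ℚ)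
def cA3 (g : ℤ) : ℚ := 432*(g:ℚ)^3 + 1512*(g:ℚ)^2 + 1296*(g:ℚ)
def cB3 (g : ℤ) : ℚ := 1450*(g:ℚ)^3 + 8001*(g:ℚ)^2 + 13115*(g:ℚ) + 5442
def cC3 (g : ℤ) : ℚ := 1584*(g:ℚ)^3 + 5544*(g:ℚ)^2 + 3936*(g:ℚ)
def cD1 (g : ℤ) : ℚ := 14344*(g:ℚ)^6 + 165692*(g:ℚ)^5 + 747682*(g:ℚ)^4 + 1636869*(g:ℚ)^3
      + 1719009*(g:ℚ)^2 + 677844*(g:ℚ) - 540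
def cD2 (g : ℤ) : ℚ := 17280*(g:ℚ)^4 + 112320*(g:ℚ)^3 + 224640*(g:ℚ)^2 + 129600*(g:ℚ)
def cD3 (g : ℤ) : ℚ := 352*(g:ℚ)^5 + 1440*(g:ℚ)^4 + 1448*(g:ℚ)^3 + 120*(g:ℚ)^2

lemma gpos {g : ℤ} (hg : g > 24) : (25 : ℚ) ≤ (g : ℚ) := by exact_mod_cast hg

lemma hA1 {g : ℤ} (hg : g > 24) : cA1 g ≠ 0 := by
  have h := gpos hg; rw [cA1]; nlinarith
lemma hA2 {g : ℤ} (hg : g > 24) : cA2 g ≠ 0 := by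
  have h := gpos hg; rw [cA2]; nlinarith
lemma hA3 {g : ℤ} (hg : g > 24) : cA3 g ≠ 0 := by
  have h := gpos hg; rw [cA3]; nlinarith

/-- Monomial identities. -/
lemma w1m : a1^3 = (monomial M1 (1:ℚ)) := by
  simp [a1, M1, X_pow_eq_monomial, X, monomial_pow, monomial_mul, Finsupp.smul_single]
lemma w2m : a1^2 * a2' = (monomial M2 (1:ℚ)) := by
  simp [a1, a2', M2, X, monomial_pow, monomial_mul, Finsupp.smul_single]
lemma w3m : a1 * a2'^2 = (monomial M3 (1:ℚ)) := by
  simp [a1, a2', M3, X, monomial_pow, monomial_mul, Finsupp.smul_single]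
lemma w4m : a2'^3 = (monomial M4 (1:ℚ)) := by
  simp [a2', M4, X, monomial_pow, monomial_mul, Finsupp.smul_single]
lemma w5m : a1 * a3' = (monomial M5 (1:ℚ)) := by
  simp [a1, a3', M5, X, monomial_mul]
lemma w6m : a2' * a3' = (monomial M6 (1:ℚ)) := by
  simp [a2', a3', M6, X, monomial_mul]

lemma r1_eq (g : ℤ) : r1 g = monomial M1 (cA1 g) - monomial M5 (cB1 g) := by
  rw [r1, cA1, cB1, w1m, w5m, C_mul_monomial, C_mul_monomial, mul_one, mul_one]

lemma r2_eq (g : ℤ) :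
    r2 g = monomial M2 (cA2 g) - monomial M5 (cB2 g) - monomial M6 (cC2 g) := by
  rw [r2, cA2, cB2, cC2, w2m, w5m, w6m, C_mul_monomial, C_mul_monomial, C_mul_monomial,
    mul_one, mul_one, mul_one]

lemma r3_eq (g : ℤ) :
    r3 g = monomial M3 (cA3 g) - monomial M5 (cB3 g) - monomial M6 (cC3 g) := by
  rw [r3, cA3, cB3, cC3, w3m, w5m, w6m, C_mul_monomial, C_mul_monomial, C_mul_monomial,
    mul_one, mul_one, mul_one]

lemma r4_eq (g : ℤ) :
    r4 g = monomial N1 (cD1 g) - monomial N2 (cD2 g) + monomial N3 (cD3 g) := by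
  rw [r4, cD1, cD2, cD3, a1, a2', a3']
  rw [show ((X 0 : R3)^2 * X 2) = monomial N1 1 by
        simp [N1, X, monomial_pow, monomial_mul, Finsupp.smul_single],
      show ((X 1 : R3)^2 * X 2) = monomial N2 1 by
        simp [N2, X, monomial_pow, monomial_mul, Finsupp.smul_single],
      show ((X 2 : R3)^2) = monomial N3 1 by
        simp [N3, X, monomial_pow, monomial_mul, Finsupp.smul_single]]
  rw [C_mul_monomial, C_mul_monomial, C_mul_monomial, mul_one, mul_one, mul_one]

/-- The linear functionals used to detect the degree-3 component. -/
def phi (g : ℤ) : R3 →ₗ[ℚ] (Fin 3 → ℚ) :=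
  LinearMap.pi
    ![lcoeff ℚ M5 + (cB1 g / cA1 g) • lcoeff ℚ M1 + (cB2 g / cA2 g) • lcoeff ℚ M2
        + (cB3 g / cA3 g) • lcoeff ℚ M3,
      lcoeff ℚ M4,
      lcoeff ℚ M6 + (cC2 g / cA2 g) • lcoeff ℚ M2 + (cC3 g / cA3 g) • lcoeff ℚ M3]

lemma phi_mul_r1 {g : ℤ} (hg : g > 24) (p : R3) : phi g (p * r1 g) = 0 := by
  have h1 := hA1 hg
  funext i
  fin_cases i <;>
  · simp [phi, r1_eq, mul_sub, coeff_mul_monomial', le3, M1, M2, M3, M4, M5, M6,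
      Finsupp.single_apply]
    try field_simp
    try ring

lemma phi_mul_r2 {g : ℤ} (hg : g > 24) (p : R3) : phi g (p * r2 g) = 0 := by
  have h2 := hA2 hg
  funext i
  fin_cases i <;>
  · simp [phi, r2_eq, mul_sub, coeff_mul_monomial', le3, M1, M2, M3, M4, M5, M6,
      Finsupp.single_apply]
    try field_simp
    try ring

lemma phi_mul_r3 {g : ℤ} (hg : g > 24) (p : R3) : phi g (p * r3 g) = 0 := by
  have h3 := hA3 hg
  funext i
  fin_cases i <;>
  · simp [phi, r3_eq, mul_sub, coeff_mul_monomial', le3, M1, M2, M3, M4, M5, M6,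
      Finsupp.single_apply]
    try field_simp
    try ring

lemma phi_mul_r4 {g : ℤ} (_hg : g > 24) (p : R3) : phi g (p * r4 g) = 0 := by
  funext i
  fin_cases i <;>
  · simp [phi, r4_eq, mul_sub, mul_add, coeff_mul_monomial', le3, M1, M2, M3, M4, M5, M6,
      N1, N2, N3, Finsupp.single_apply]

/-- `phi` vanishes on the ideal. -/
lemma phi_Ig {g : ℤ} (hg : g > 24) {x : R3} (hx : x ∈ Ig g) : phi g x = 0 := by
  have main : ∀ p : R3, phi g (p * x) = 0 := by
    refine Submodule.span_induction
      (p := fun y _ => ∀ p : R3, phi g (p * y) = 0) ?_ ?_ ?_ ?_ hx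
    · intro y hy p
      simp only [Set.mem_insert_iff, Set.mem_singleton_iff] at hy
      rcases hy with rfl | rfl | rfl | rfl
      · exact phi_mul_r1 hg p
      · exact phi_mul_r2 hg p
      · exact phi_mul_r3 hg p
      · exact phi_mul_r4 hg p
    · intro p; simp
    · intro y z _ _ hy hz p
      rw [mul_add, map_add, hy, hz, add_zero]
    · intro c y _ hy p
      rw [smul_eq_mul, ← mul_assoc]
      exact hy (p * c)
  simpa using main 1

lemma Qmk_eq_zero {g : ℤ} {x : R3} (hx : x ∈ Ig g) : Qmk g x = 0 := by
  show Ideal.Quotient.mkₐ ℚ (Ig g) x = 0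
  rw [Ideal.Quotient.mkₐ_eq_mk, Ideal.Quotient.eq_zero_iff_mem]
  exact hx

lemma mem_Ig_of_Qmk_eq_zero {g : ℤ} {x : R3} (hx : Qmk g x = 0) : x ∈ Ig g := by
  rwa [show Qmk g x = Ideal.Quotient.mk (Ig g) x from rfl,
    Ideal.Quotient.eq_zero_iff_mem] at hx

/-- Enumeration of the weighted-degree-3 exponents. -/
lemma deg3_cases (d : Fin 3 →₀ ℕ) (hd : (Finsupp.weight wt) d = 3) :
    d = M1 ∨ d = M2 ∨ d = M3 ∨ d = M4 ∨ d = M5 ∨ d = M6 := by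
  rw [weight_eval] at hd
  have h2 : d 2 = 0 ∨ d 2 = 1 := by omega
  rcases h2 with h2 | h2
  · have h : (d 0 = 3 ∧ d 1 = 0) ∨ (d 0 = 2 ∧ d 1 = 1) ∨ (d 0 = 1 ∧ d 1 = 2)
        ∨ (d 0 = 0 ∧ d 1 = 3) := by omega
    rcases h with ⟨ha, hb⟩ | ⟨ha, hb⟩ | ⟨ha, hb⟩ | ⟨ha, hb⟩
    · exact Or.inl (by rw [eq3]; simp [M1, Finsupp.single_apply, ha, hb, h2])
    · exact Or.inr (Or.inl (by rw [eq3]; simp [M2, Finsupp.single_apply, ha, hb, h2]))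
    · exact Or.inr (Or.inr (Or.inl (by
        rw [eq3]; simp [M3, Finsupp.single_apply, ha, hb, h2])))
    · exact Or.inr (Or.inr (Or.inr (Or.inl (by
        rw [eq3]; simp [M4, Finsupp.single_apply, ha, hb, h2]))))
  · have h : (d 0 = 1 ∧ d 1 = 0) ∨ (d 0 = 0 ∧ d 1 = 1) := by omega
    rcases h with ⟨ha, hb⟩ | ⟨ha, hb⟩
    · exact Or.inr (Or.inr (Or.inr (Or.inr (Or.inl (by
        rw [eq3]; simp [M5, Finsupp.single_apply, ha, hb, h2])))))
    · exact Or.inr (Or.inr (Or.inr (Or.inr (Or.inr (by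
        rw [eq3]; simp [M6, Finsupp.single_apply, ha, hb, h2])))))

end Hur

open Hur

set_option maxHeartbeats 2000000 in
/-- For `g > 24`, the images of `a₁a₃′, a₂′³, a₂′a₃′` form a `ℚ`-basis of `Q(g)_3`;
in particular `dim_ℚ Q(g)_3 = 3`. -/
theorem basis_QComp_three (g : ℤ) (hg : g > 24) :
    LinearIndependent ℚ ![Qmk g (a1 * a3'), Qmk g (a2'^3), Qmk g (a2' * a3')] ∧
    QComp g 3 = Submodule.span ℚ {Qmk g (a1 * a3'), Qmk g (a2'^3), Qmk g (a2' * a3')} ∧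
    Module.finrank ℚ (QComp g 3) = 3 := by
  have hA1 := Hur.hA1 hg
  have hA2 := Hur.hA2 hg
  have hA3 := Hur.hA3 hg
  -- linear independence
  have hindep : LinearIndependent ℚ ![Qmk g (a1 * a3'), Qmk g (a2'^3), Qmk g (a2' * a3')] := by
    rw [Fintype.linearIndependent_iff]
    intro c hc
    have hy : Qmk g (c 0 • (a1 * a3') + c 1 • (a2'^3) + c 2 • (a2' * a3')) = 0 := by
      rw [map_add, map_add, map_smul, map_smul, map_smul]
      simpa [Fin.sum_univ_three] using hc
    have hmem := mem_Ig_of_Qmk_eq_zero hy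
    have hphi := phi_Ig hg hmem
    have e0 := congrFun hphi 0
    have e1 := congrFun hphi 1
    have e2 := congrFun hphi 2
    simp [phi, w4m, w5m, w6m, coeff_monomial, eq3, M1, M2, M3, M4, M5, M6,
      Finsupp.single_apply] at e0 e1 e2
    intro i
    fin_cases i <;> assumption
  -- membership of the images of the six degree-3 monomials in the span
  set S : Set (R3 ⧸ Ig g) := {Qmk g (a1 * a3'), Qmk g (a2'^3), Qmk g (a2' * a3')} with hS
  have hv5 : Qmk g (monomial M5 1) ∈ Submodule.span ℚ S := by
    rw [← w5m]; exact Submodule.subset_span (Set.mem_insert _ _)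
  have hv4 : Qmk g (monomial M4 1) ∈ Submodule.span ℚ S := by
    rw [← w4m]; exact Submodule.subset_span (Set.mem_insert_of_mem _ (Set.mem_insert _ _))
  have hv6 : Qmk g (monomial M6 1) ∈ Submodule.span ℚ S := by
    rw [← w6m]
    exact Submodule.subset_span (Set.mem_insert_of_mem _ (Set.mem_insert_of_mem _ rfl))
  have key : ∀ (d : Fin 3 →₀ ℕ), (Finsupp.weight wt) d = 3 → ∀ c : ℚ,
      Qmk g (monomial d c) ∈ Submodule.span ℚ S := by
    intro d hd c
    have hmono : (monomial d c : R3) = c • monomial d 1 := by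
      rw [smul_monomial, smul_eq_mul, mul_one]
    rw [hmono, map_smul]
    refine Submodule.smul_mem _ _ ?_
    rcases deg3_cases d hd with rfl | rfl | rfl | rfl | rfl | rfl
    · -- M1 : use r1
      have h0 : Qmk g (r1 g) = 0 := Qmk_eq_zero (Ideal.subset_span (Set.mem_insert _ _))
      rw [r1_eq] at h0
      have h1 : (monomial M1 (cA1 g) : R3) = cA1 g • monomial M1 1 := by
        rw [smul_monomial, smul_eq_mul, mul_one]
      have h2 : (monomial M5 (cB1 g) : R3) = cB1 g • monomial M5 1 := by
        rw [smul_monomial, smul_eq_mul, mul_one]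
      rw [map_sub, sub_eq_zero, h1, h2, map_smul, map_smul] at h0
      have : Qmk g (monomial M1 1) = (cA1 g)⁻¹ • (cB1 g • Qmk g (monomial M5 1)) := by
        rw [← h0, smul_smul, inv_mul_cancel₀ hA1, one_smul]
      rw [this]
      exact Submodule.smul_mem _ _ (Submodule.smul_mem _ _ hv5)
    · -- M2 : use r2
      have h0 : Qmk g (r2 g) = 0 := Qmk_eq_zero (Ideal.subset_span
        (Set.mem_insert_of_mem _ (Set.mem_insert _ _)))
      rw [r2_eq] at h0
      have h1 : (monomial M2 (cA2 g) : R3) = cA2 g • monomial M2 1 := by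
        rw [smul_monomial, smul_eq_mul, mul_one]
      have h2 : (monomial M5 (cB2 g) : R3) = cB2 g • monomial M5 1 := by
        rw [smul_monomial, smul_eq_mul, mul_one]
      have h3 : (monomial M6 (cC2 g) : R3) = cC2 g • monomial M6 1 := by
        rw [smul_monomial, smul_eq_mul, mul_one]
      rw [map_sub, map_sub, sub_sub, sub_eq_zero, h1, h2, h3, map_smul, map_smul,
        map_smul] at h0
      have : Qmk g (monomial M2 1) = (cA2 g)⁻¹ •
          (cB2 g • Qmk g (monomial M5 1) + cC2 g • Qmk g (monomial M6 1)) := by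
        rw [← h0, smul_smul, inv_mul_cancel₀ hA2, one_smul]
      rw [this]
      exact Submodule.smul_mem _ _ (Submodule.add_mem _
        (Submodule.smul_mem _ _ hv5) (Submodule.smul_mem _ _ hv6))
    · -- M3 : use r3
      have h0 : Qmk g (r3 g) = 0 := Qmk_eq_zero (Ideal.subset_span
        (Set.mem_insert_of_mem _ (Set.mem_insert_of_mem _ (Set.mem_insert _ _))))
      rw [r3_eq] at h0
      have h1 : (monomial M3 (cA3 g) : R3) = cA3 g • monomial M3 1 := by
        rw [smul_monomial, smul_eq_mul, mul_one]
      have h2 : (monomial M5 (cB3 g) : R3) = cB3 g • monomial M5 1 := by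
        rw [smul_monomial, smul_eq_mul, mul_one]
      have h3 : (monomial M6 (cC3 g) : R3) = cC3 g • monomial M6 1 := by
        rw [smul_monomial, smul_eq_mul, mul_one]
      rw [map_sub, map_sub, sub_sub, sub_eq_zero, h1, h2, h3, map_smul, map_smul,
        map_smul] at h0
      have : Qmk g (monomial M3 1) = (cA3 g)⁻¹ •
          (cB3 g • Qmk g (monomial M5 1) + cC3 g • Qmk g (monomial M6 1)) := by
        rw [← h0, smul_smul, inv_mul_cancel₀ hA3, one_smul]
      rw [this]
      exact Submodule.smul_mem _ _ (Submodule.add_mem _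
        (Submodule.smul_mem _ _ hv5) (Submodule.smul_mem _ _ hv6))
    · exact hv4
    · exact hv5
    · exact hv6
  -- the span equality
  have hspan : QComp g 3 = Submodule.span ℚ S := by
    apply le_antisymm
    · rintro y hy
      rw [QComp, Submodule.mem_map] at hy
      obtain ⟨x, hx, rfl⟩ := hy
      rw [mem_weightedHomogeneousSubmodule] at hx
      have hxsum : Qmk g x = ∑ d ∈ x.support, Qmk g (monomial d (coeff d x)) := by
        conv_lhs => rw [x.as_sum]
        rw [map_sum]
      rw [hxsum]
      refine Submodule.sum_mem _ fun d hd => ?_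
      exact key d (hx (mem_support_iff.mp hd)) _
    · rw [Submodule.span_le]
      rintro y hy
      simp only [hS, Set.mem_insert_iff, Set.mem_singleton_iff] at hy
      have hm : ∀ (m : Fin 3 →₀ ℕ), (Finsupp.weight wt) m = 3 →
          Qmk g (monomial m (1:ℚ)) ∈ QComp g 3 := by
        intro m hm
        exact Submodule.mem_map_of_mem
          ((mem_weightedHomogeneousSubmodule ℚ wt 3 _).mpr
            (isWeightedHomogeneous_monomial _ _ _ hm))
      rcases hy with rfl | rfl | rfl
      · rw [w5m]; exact hm M5 (by rw [weight_eval]; simp [M5, Finsupp.single_apply])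
      · rw [w4m]; exact hm M4 (by rw [weight_eval]; simp [M4, Finsupp.single_apply])
      · rw [w6m]; exact hm M6 (by rw [weight_eval]; simp [M6, Finsupp.single_apply])
  -- the rank computation
  have hrange : Set.range ![Qmk g (a1 * a3'), Qmk g (a2'^3), Qmk g (a2' * a3')] = S := by
    ext y
    simp only [Set.mem_range, hS, Set.mem_insert_iff, Set.mem_singleton_iff]
    constructor
    · rintro ⟨i, rfl⟩
      fin_cases i
      · exact Or.inl rfl
      · exact Or.inr (Or.inl rfl)
      · exact Or.inr (Or.inr rfl)
    · rintro (rfl | rfl | rfl)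
      exacts [⟨0, rfl⟩, ⟨1, rfl⟩, ⟨2, rfl⟩]
  refine ⟨hindep, hspan, ?_⟩
  rw [hspan, ← hrange]
  rw [finrank_span_eq_card hindep]
  simp
end
end

section
/- For every integer g with g > 28, the images of a₂′⁴ and a₃′² in Q(g) form a ℚ-basis of the weighted-degree-4 component Q(g)_4; in particular dim_ℚ Q(g)_4 = 2. -/
open MvPolynomial

noncomputable section

/-!
In degree 4, `Q(g)` is spanned by the nine monomials of weight 4 modulo the seven relations
`a₁rᵢ`, `a₂′rᵢ` (`i ≤ 3`) and `r₄`. No relation involves `a₂′⁴`. Eliminating `a₁³a₂′` between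
`a₂′r₁` and `a₁r₂`, and `a₁²a₂′²` between `a₂′r₂` and `a₁r₃`, leaves together with `r₄` a
3 × 3 system for the monomials linear in `a₃′`. Solving it gives
`(g+2)(4g²+4g+3) a₁²a₃′ = 8g² a₃′²`, after which `24 a₁a₂′a₃′ = 11(2g+5) a₁²a₃′` and `r₄` handle
the other two, and `a₁r₁`, `a₂′r₁`, `a₁r₃`, `a₂′r₃` those free of `a₃′`. Every coefficient
divided by is a product of factors positive for `g > 0`, so all of `Q(g)₄` lies in the span of
`a₂′⁴` and `a₃′²`. For independence, evaluation at `(0, 1, 0)` kills `I(g)` and detects `a₂′⁴`,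
while a linear form on the degree-4 coefficients orthogonal to the seven relations kills `I(g)`
and is nonzero on `a₃′²`.
-/

section Relations

variable {A : Type*} [CommRing A] [Algebra ℚ A]

structure SatisfiesRelations (g : ℤ) (x y z : A) : Prop where
  rel₁ : (2*g^3 + 9*g^2 + 10*g : A) * x^3 = (8*g^2 + 24*g + 8) * (x*z)
  rel₂ : (12*g^3 + 42*g^2 + 36*g : A) * (x^2*y)
    = (22*g^3 + 121*g^2 + 187*g + 66) * (x*z) + (24*g^2 + 24*g) * (y*z)
  rel₃ : (432*g^3 + 1512*g^2 + 1296*g : A) * (x*y^2)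
    = (1450*g^3 + 8001*g^2 + 13115*g + 5442) * (x*z) + (1584*g^3 + 5544*g^2 + 3936*g) * (y*z)
  rel₄ : (14344*g^6 + 165692*g^5 + 747682*g^4 + 1636869*g^3 + 1719009*g^2 + 677844*g - 540 : A)
      * (x^2*z) + (352*g^5 + 1440*g^4 + 1448*g^3 + 120*g^2) * z^2
    = (17280*g^4 + 112320*g^3 + 224640*g^2 + 129600*g) * (y^2*z)

namespace SatisfiesRelations

variable {g : ℤ} {x y z : A}

theorem smul_xyz (h : SatisfiesRelations g x y z) (hg : 0 < g) :
    (24 : ℚ) • (x*y*z) = (11*(2*g+5) : ℚ) • (x^2*z) := by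
  have hc : (g*(g+2)^2*(g+3)*(2*g+1) : ℚ) ≠ 0 := by positivity
  rw [← smul_right_inj hc, smul_smul, smul_smul]
  simp only [Algebra.smul_def, map_add, map_mul, map_pow, map_one, map_ofNat, map_intCast]
  linear_combination (2*g^3 + 9*g^2 + 10*g : A) * x * h.rel₂
    - (12*g^3 + 42*g^2 + 36*g : A) * y * h.rel₁

theorem smul_x2z (h : SatisfiesRelations g x y z) (hg : 0 < g) :
    ((g+2)*(4*g^2+4*g+3) : ℚ) • (x^2*z) = (8*g^2 : ℚ) • z^2 := by
  -- `a₂′r₂` and `a₁r₃` share the monomial `a₁²a₂′²`, as `432 = 36 · 12`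
  have hb : 36*((22*g^3 + 121*g^2 + 187*g + 66) * (x*y*z) + (24*g^2 + 24*g) * (y^2*z))
      = (1450*g^3 + 8001*g^2 + 13115*g + 5442 : A) * (x^2*z)
        + (1584*g^3 + 5544*g^2 + 3936*g) * (x*y*z) := by
    linear_combination x * h.rel₃ - 36 * y * h.rel₂
  have hxyz := h.smul_xyz hg
  have hc : (20736*g*(g+1)*(2*g+5)*(2*g+3)*(11*g+1) : ℚ) ≠ 0 := by positivity
  rw [← smul_right_inj hc, smul_smul, smul_smul]
  simp only [Algebra.smul_def, map_add, map_mul, map_pow, map_one, map_ofNat, map_intCast]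
    at hxyz ⊢
  linear_combination (36*(22*g^3 + 121*g^2 + 187*g + 66) - (1584*g^3 + 5544*g^2 + 3936*g) : A)
      * (17280*g^4 + 112320*g^3 + 224640*g^2 + 129600*g) * hxyz
    - 24 * (17280*g^4 + 112320*g^3 + 224640*g^2 + 129600*g : A) * hb
    - 864 * (24*g^2 + 24*g : A) * h.rel₄

theorem mem_span_sq_of_linear_in_z (h : SatisfiesRelations g x y z) (hg : 0 < g) :
    x^2*z ∈ ℚ ∙ z^2 ∧ x*y*z ∈ ℚ ∙ z^2 ∧ y^2*z ∈ ℚ ∙ z^2 := by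
  set M := ℚ ∙ z^2
  have hz : z^2 ∈ M := Submodule.mem_span_singleton_self _
  have hx2z : x^2*z ∈ M := by
    refine (M.smul_mem_iff (show ((g+2)*(4*g^2+4*g+3) : ℚ) ≠ 0 by positivity)).mp ?_
    rw [h.smul_x2z hg]
    exact M.smul_mem _ hz
  have hxyz : x*y*z ∈ M := by
    refine (M.smul_mem_iff (show (24 : ℚ) ≠ 0 by norm_num)).mp ?_
    rw [h.smul_xyz hg]
    exact M.smul_mem _ hx2z
  have hy2z : y^2*z ∈ M := by
    have hK : (17280*g^4 + 112320*g^3 + 224640*g^2 + 129600*g : ℚ) ≠ 0 := by positivity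
    refine (M.smul_mem_iff hK).mp ?_
    have : (17280*g^4 + 112320*g^3 + 224640*g^2 + 129600*g : ℚ) • (y^2*z)
        = (14344*g^6 + 165692*g^5 + 747682*g^4 + 1636869*g^3 + 1719009*g^2 + 677844*g - 540 : ℚ)
          • (x^2*z) + (352*g^5 + 1440*g^4 + 1448*g^3 + 120*g^2 : ℚ) • z^2 := by
      simp only [Algebra.smul_def, map_add, map_sub, map_mul, map_pow, map_ofNat, map_intCast]
      linear_combination -h.rel₄
    rw [this]
    exact add_mem (M.smul_mem _ hx2z) (M.smul_mem _ hz)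
  exact ⟨hx2z, hxyz, hy2z⟩

theorem mem_span_sq_of_z_free (h : SatisfiesRelations g x y z) (hg : 0 < g) :
    x^4 ∈ ℚ ∙ z^2 ∧ x^3*y ∈ ℚ ∙ z^2 ∧ x^2*y^2 ∈ ℚ ∙ z^2 ∧ x*y^3 ∈ ℚ ∙ z^2 := by
  set M := ℚ ∙ z^2
  obtain ⟨hx2z, hxyz, hy2z⟩ := h.mem_span_sq_of_linear_in_z hg
  have hA : (2*g^3 + 9*g^2 + 10*g : ℚ) ≠ 0 := by positivity
  have hF : (432*g^3 + 1512*g^2 + 1296*g : ℚ) ≠ 0 := by positivity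
  refine ⟨(M.smul_mem_iff hA).mp ?_, (M.smul_mem_iff hA).mp ?_, (M.smul_mem_iff hF).mp ?_,
    (M.smul_mem_iff hF).mp ?_⟩
  · rw [show (2*g^3 + 9*g^2 + 10*g : ℚ) • x^4 = (8*g^2 + 24*g + 8 : ℚ) • (x^2*z) by
      simp only [Algebra.smul_def, map_add, map_mul, map_pow, map_ofNat, map_intCast]
      linear_combination x * h.rel₁]
    exact M.smul_mem _ hx2z
  · rw [show (2*g^3 + 9*g^2 + 10*g : ℚ) • (x^3*y) = (8*g^2 + 24*g + 8 : ℚ) • (x*y*z) by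
      simp only [Algebra.smul_def, map_add, map_mul, map_pow, map_ofNat, map_intCast]
      linear_combination y * h.rel₁]
    exact M.smul_mem _ hxyz
  · rw [show (432*g^3 + 1512*g^2 + 1296*g : ℚ) • (x^2*y^2)
        = (1450*g^3 + 8001*g^2 + 13115*g + 5442 : ℚ) • (x^2*z)
          + (1584*g^3 + 5544*g^2 + 3936*g : ℚ) • (x*y*z) by
      simp only [Algebra.smul_def, map_add, map_mul, map_pow, map_ofNat, map_intCast]
      linear_combination x * h.rel₃]
    exact add_mem (M.smul_mem _ hx2z) (M.smul_mem _ hxyz)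
  · rw [show (432*g^3 + 1512*g^2 + 1296*g : ℚ) • (x*y^3)
        = (1450*g^3 + 8001*g^2 + 13115*g + 5442 : ℚ) • (x*y*z)
          + (1584*g^3 + 5544*g^2 + 3936*g : ℚ) • (y^2*z) by
      simp only [Algebra.smul_def, map_add, map_mul, map_pow, map_ofNat, map_intCast]
      linear_combination y * h.rel₃]
    exact add_mem (M.smul_mem _ hxyz) (M.smul_mem _ hy2z)

theorem monomial_mem_span_sq (h : SatisfiesRelations g x y z) (hg : 0 < g) {p q s : ℕ}
    (hw : p + q + 2*s = 4) (hq : q ≠ 4) : x^p*y^q*z^s ∈ ℚ ∙ z^2 := by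
  obtain ⟨hx2z, hxyz, hy2z⟩ := h.mem_span_sq_of_linear_in_z hg
  obtain ⟨hx4, hx3y, hx2y2, hxy3⟩ := h.mem_span_sq_of_z_free hg
  have hz : z^2 ∈ ℚ ∙ z^2 := Submodule.mem_span_singleton_self _
  have hs : s ≤ 2 := by omega
  have hp : p ≤ 4 := by omega
  have hq' : q ≤ 4 := by omega
  interval_cases s <;> interval_cases p <;> interval_cases q <;>
    first | omega | (simp only [pow_zero, pow_one, mul_one, one_mul]; assumption)

end SatisfiesRelations

end Relations

theorem Qmk_apply (g : ℤ) (p : R3) : Qmk g p = Ideal.Quotient.mk (Ig g) p := rfl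

theorem satisfiesRelations_mk (g : ℤ) :
    SatisfiesRelations g (Ideal.Quotient.mk (Ig g) a1) (Ideal.Quotient.mk (Ig g) a2')
      (Ideal.Quotient.mk (Ig g) a3') := by
  have hr : ∀ r ∈ ({r1 g, r2 g, r3 g, r4 g} : Set R3), Ideal.Quotient.mk (Ig g) r = 0 :=
    fun r hr => Ideal.Quotient.eq_zero_iff_mem.mpr (Ideal.subset_span hr)
  have h1 := hr (r1 g) (by simp)
  have h2 := hr (r2 g) (by simp)
  have h3 := hr (r3 g) (by simp)
  have h4 := hr (r4 g) (by simp)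
  simp only [r1, r2, r3, r4, map_add, map_sub, map_mul, map_pow, ← MvPolynomial.algebraMap_eq,
    map_ofNat, map_intCast] at h1 h2 h3 h4
  exact ⟨by linear_combination h1, by linear_combination h2, by linear_combination h3,
    by linear_combination h4⟩

def expVec (p q s : ℕ) : Fin 3 →₀ ℕ :=
  Finsupp.single 0 p + Finsupp.single 1 q + Finsupp.single 2 s

theorem expVec_self (d : Fin 3 →₀ ℕ) : expVec (d 0) (d 1) (d 2) = d := by
  ext i; fin_cases i <;> simp [expVec]

theorem expVec_inj {p q s p' q' s' : ℕ} :
    expVec p q s = expVec p' q' s' ↔ p = p' ∧ q = q' ∧ s = s' := by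
  simp [expVec, Finsupp.ext_iff, Fin.forall_fin_succ]

theorem expVec_le_expVec {p q s p' q' s' : ℕ} :
    expVec p' q' s' ≤ expVec p q s ↔ p' ≤ p ∧ q' ≤ q ∧ s' ≤ s := by
  simp [expVec, Finsupp.le_def, Fin.forall_fin_succ]

theorem expVec_sub_expVec (p q s p' q' s' : ℕ) :
    expVec p q s - expVec p' q' s' = expVec (p - p') (q - q') (s - s') := by
  ext i; fin_cases i <;> simp [expVec]

theorem weight_expVec (p q s : ℕ) : Finsupp.weight wt (expVec p q s) = p + q + 2 * s := by
  simp [expVec, Finsupp.weight_single, wt]; ring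

theorem monomial_expVec (p q s : ℕ) (c : ℚ) :
    (monomial (expVec p q s) c : R3) = C c * a1^p * a2'^q * a3'^s := by
  simp only [a1, a2', a3', X_pow_eq_monomial, C_mul_monomial, monomial_mul, mul_one, expVec]

theorem monomial_expVec_mem_QComp (g : ℤ) (p q s : ℕ) :
    Qmk g (monomial (expVec p q s) 1) ∈ QComp g (p + q + 2 * s) :=
  Submodule.mem_map_of_mem (isWeightedHomogeneous_monomial _ _ _ (weight_expVec p q s))

theorem QComp_four_le_span (g : ℤ) (hg : 0 < g) :
    QComp g 4 ≤ Submodule.span ℚ {Qmk g (a2'^4), Qmk g (a3'^2)} := by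
  rw [QComp, weightedHomogeneousSubmodule_eq_finsupp_supported,
    AddMonoidAlgebra.supported_eq_span_single, Submodule.map_span, Submodule.span_le]
  rintro _ ⟨_, ⟨d, hd : Finsupp.weight wt d = 4, rfl⟩, rfl⟩
  rw [← expVec_self d, weight_expVec] at hd
  rw [← expVec_self d]
  simp only [SetLike.mem_coe, single_eq_monomial, monomial_expVec, C_1, one_mul, Qmk_apply,
    map_mul, map_pow]
  by_cases hq : d 1 = 4
  · obtain ⟨h0, h2⟩ : d 0 = 0 ∧ d 2 = 0 := by omega
    rw [h0, h2, hq]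
    exact Submodule.subset_span (by simp)
  · exact Submodule.span_mono (by simp)
      ((satisfiesRelations_mk g).monomial_mem_span_sq hg hd hq)

theorem Ig_le_ker_aeval (g : ℤ) : Ig g ≤ RingHom.ker (aeval ![(0 : ℚ), 1, 0]) := by
  refine Ideal.span_le.mpr ?_
  rintro _ (rfl | rfl | rfl | rfl) <;> simp [r1, r2, r3, r4, a1, a2', a3']

/-- Up to the factor `1944 (g+2)² (2g+5) (4g²+4g+3)`, the coordinate along `a₃′²` in the basis
`(a₂′⁴, a₃′²)` of `Q(g)₄`, read off from the degree-4 coefficients. -/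
def zSqCoord (g : ℤ) : R3 →ₗ[ℚ] ℚ :=
  (124416*g*(g^2+3*g+1) : ℚ) • lcoeff ℚ (expVec 4 0 0)
  + (57024*g*(2*g+5)*(g^2+3*g+1) : ℚ) • lcoeff ℚ (expVec 3 1 0)
  + (72*g*(2*g+5)*(726*g^3+3992*g^2+6169*g+1814) : ℚ) • lcoeff ℚ (expVec 2 2 0)
  + (g*(2*g+5)*(47916*g^4+383130*g^3+1065240*g^2+1136819*g+298982) : ℚ) • lcoeff ℚ (expVec 1 3 0)
  + (15552*g^2*(g+2)*(2*g+5) : ℚ) • lcoeff ℚ (expVec 2 0 1)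
  + (7128*g^2*(g+2)*(2*g+5)^2 : ℚ) • lcoeff ℚ (expVec 1 1 1)
  + (9*g*(g+2)*(2*g+5)*(1452*g^3+7256*g^2+9065*g-6) : ℚ) • lcoeff ℚ (expVec 0 2 1)
  + (1944*(g+2)^2*(2*g+5)*(4*g^2+4*g+3) : ℚ) • lcoeff ℚ (expVec 0 0 2)

theorem r1_eq_monomials (g : ℤ) : r1 g = monomial (expVec 3 0 0) (2*g^3 + 9*g^2 + 10*g : ℚ)
    - monomial (expVec 1 0 1) (8*g^2 + 24*g + 8 : ℚ) := by
  simp only [r1, monomial_expVec]; ring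

theorem r2_eq_monomials (g : ℤ) : r2 g = monomial (expVec 2 1 0) (12*g^3 + 42*g^2 + 36*g : ℚ)
    - monomial (expVec 1 0 1) (22*g^3 + 121*g^2 + 187*g + 66 : ℚ)
    - monomial (expVec 0 1 1) (24*g^2 + 24*g : ℚ) := by
  simp only [r2, monomial_expVec]; ring

theorem r3_eq_monomials (g : ℤ) : r3 g = monomial (expVec 1 2 0) (432*g^3 + 1512*g^2 + 1296*g : ℚ)
    - monomial (expVec 1 0 1) (1450*g^3 + 8001*g^2 + 13115*g + 5442 : ℚ)
    - monomial (expVec 0 1 1) (1584*g^3 + 5544*g^2 + 3936*g : ℚ) := by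
  simp only [r3, monomial_expVec]; ring

theorem r4_eq_monomials (g : ℤ) : r4 g = monomial (expVec 2 0 1)
      (14344*g^6 + 165692*g^5 + 747682*g^4 + 1636869*g^3 + 1719009*g^2 + 677844*g - 540 : ℚ)
    - monomial (expVec 0 2 1) (17280*g^4 + 112320*g^3 + 224640*g^2 + 129600*g : ℚ)
    + monomial (expVec 0 0 2) (352*g^5 + 1440*g^4 + 1448*g^3 + 120*g^2 : ℚ) := by
  simp only [r4, monomial_expVec]; ring

theorem zSqCoord_mul_eq_zero (g : ℤ) (f : R3) {r : R3}
    (hr : r ∈ ({r1 g, r2 g, r3 g, r4 g} : Set R3)) : zSqCoord g (f * r) = 0 := by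
  rcases hr with rfl | rfl | rfl | rfl <;>
  simp only [r1_eq_monomials, r2_eq_monomials, r3_eq_monomials, r4_eq_monomials, mul_sub, mul_add,
    zSqCoord, LinearMap.add_apply, LinearMap.smul_apply, lcoeff_apply, coeff_add, coeff_sub,
    coeff_mul_monomial', expVec_le_expVec, expVec_sub_expVec, smul_eq_mul] <;>
  norm_num <;>
  ring

theorem zSqCoord_eq_zero_of_mem (g : ℤ) {p : R3} (hp : p ∈ Ig g) : zSqCoord g p = 0 := by
  suffices ∀ f, zSqCoord g (f * p) = 0 by simpa using this 1
  induction hp using Submodule.span_induction with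
  | mem r hr => exact fun f => zSqCoord_mul_eq_zero g f hr
  | zero => simp
  | add p q _ _ hp hq => intro f; rw [mul_add, map_add, hp, hq, add_zero]
  | smul c p _ hp => intro f; rw [smul_eq_mul, ← mul_assoc]; exact hp _

theorem zSqCoord_a2'_pow_four (g : ℤ) : zSqCoord g (a2'^4) = 0 := by
  rw [show (a2'^4 : R3) = monomial (expVec 0 4 0) 1 by simp [monomial_expVec]]
  simp [zSqCoord, coeff_monomial, expVec_inj]

theorem zSqCoord_a3'_sq (g : ℤ) :
    zSqCoord g (a3'^2) = 1944*(g+2)^2*(2*g+5)*(4*g^2+4*g+3) := by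
  rw [show (a3'^2 : R3) = monomial (expVec 0 0 2) 1 by simp [monomial_expVec]]
  simp [zSqCoord, coeff_monomial, expVec_inj]

theorem linearIndependent_pair (g : ℤ) (hg : 0 < g) :
    LinearIndependent ℚ ![Qmk g (a2'^4), Qmk g (a3'^2)] := by
  rw [LinearIndependent.pair_iff]
  intro s t hst
  have hmem : s • a2'^4 + t • a3'^2 ∈ Ig g := by
    rwa [← Ideal.Quotient.eq_zero_iff_mem, ← Qmk_apply, map_add, map_smul, map_smul]
  have hs : s = 0 := by simpa [a2', a3'] using Ig_le_ker_aeval g hmem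
  have ht := zSqCoord_eq_zero_of_mem g hmem
  rw [map_add, map_smul, map_smul, zSqCoord_a2'_pow_four, zSqCoord_a3'_sq, smul_zero, zero_add,
    smul_eq_mul] at ht
  exact ⟨hs, (mul_eq_zero.mp ht).resolve_right (by positivity)⟩

/-- For `g > 28`, the images of `a₂′⁴` and `a₃′²` form a `ℚ`-basis of `Q(g)_4`;
in particular `dim_ℚ Q(g)_4 = 2`. -/
theorem basis_QComp_four (g : ℤ) (hg : g > 28) :
    LinearIndependent ℚ ![Qmk g (a2'^4), Qmk g (a3'^2)] ∧
    QComp g 4 = Submodule.span ℚ {Qmk g (a2'^4), Qmk g (a3'^2)} ∧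
    Module.finrank ℚ (QComp g 4) = 2 := by
  have hg₀ : 0 < g := by omega
  have hli := linearIndependent_pair g hg₀
  have hspan : QComp g 4 = Submodule.span ℚ {Qmk g (a2'^4), Qmk g (a3'^2)} := by
    refine le_antisymm (QComp_four_le_span g hg₀) (Submodule.span_le.mpr ?_)
    rintro _ (rfl | rfl)
    · simpa [monomial_expVec] using monomial_expVec_mem_QComp g 0 4 0
    · simpa [monomial_expVec] using monomial_expVec_mem_QComp g 0 0 2
  refine ⟨hli, hspan, ?_⟩
  rw [hspan, ← Matrix.range_cons_cons_empty, finrank_span_eq_card hli, Fintype.card_fin]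

end
end

section
/- For every integer g, the ideal I(g) is contained in the ideal of R generated by a₁ and a₃′; consequently, for every natural number i the monomial a₂′^i does not lie in I(g), i.e. the image of a₂′^i in Q(g) is nonzero. -/
open MvPolynomial

noncomputable section

/-- For every `g`, `I(g) ⊆ (a₁, a₃′)`; consequently no power `a₂′^i` lies in `I(g)`,
i.e. the image of `a₂′^i` in `Q(g)` is nonzero. -/
theorem Ig_le_span_and_pow_not_mem (g : ℤ) :
    Ig g ≤ Ideal.span ({a1, a3'} : Set R3) ∧
    ∀ i : ℕ, a2'^i ∉ Ig g := by
  have hle : Ig g ≤ Ideal.span ({a1, a3'} : Set R3) := by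
    rw [Ig, Ideal.span_le]
    intro x hx
    simp only [Set.mem_insert_iff, Set.mem_singleton_iff] at hx
    rcases hx with h | h | h | h <;> subst h <;>
      rw [SetLike.mem_coe, Ideal.mem_span_pair]
    · exact ⟨C (2*(g:ℚ)^3 + 9*(g:ℚ)^2 + 10*(g:ℚ)) * a1^2,
        - C (8*(g:ℚ)^2 + 24*(g:ℚ) + 8) * a1, by rw [r1]; ring⟩
    · exact ⟨C (12*(g:ℚ)^3 + 42*(g:ℚ)^2 + 36*(g:ℚ)) * (a1 * a2')
          - C (22*(g:ℚ)^3 + 121*(g:ℚ)^2 + 187*(g:ℚ) + 66) * a3',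
        - C (24*(g:ℚ)^2 + 24*(g:ℚ)) * a2', by rw [r2]; ring⟩
    · exact ⟨C (432*(g:ℚ)^3 + 1512*(g:ℚ)^2 + 1296*(g:ℚ)) * a2'^2
          - C (1450*(g:ℚ)^3 + 8001*(g:ℚ)^2 + 13115*(g:ℚ) + 5442) * a3',
        - C (1584*(g:ℚ)^3 + 5544*(g:ℚ)^2 + 3936*(g:ℚ)) * a2', by rw [r3]; ring⟩
    · exact ⟨0,
        C (14344*(g:ℚ)^6 + 165692*(g:ℚ)^5 + 747682*(g:ℚ)^4 + 1636869*(g:ℚ)^3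
          + 1719009*(g:ℚ)^2 + 677844*(g:ℚ) - 540) * a1^2
        - C (17280*(g:ℚ)^4 + 112320*(g:ℚ)^3 + 224640*(g:ℚ)^2 + 129600*(g:ℚ)) * a2'^2
        + C (352*(g:ℚ)^5 + 1440*(g:ℚ)^4 + 1448*(g:ℚ)^3 + 120*(g:ℚ)^2) * a3',
        by rw [r4]; ring⟩
  refine ⟨hle, fun i hmem => ?_⟩
  have h2 := hle hmem
  rw [Ideal.mem_span_pair] at h2
  obtain ⟨u, v, huv⟩ := h2
  have := congrArg (eval (![0, 1, 0] : Fin 3 → ℚ)) huv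
  simp [a1, a2', a3'] at this
end
end
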